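/- (Local-distribution fixed point for MFCG.) Under Assumption (Lip3) and L_p^glob + L_p^loc < |𝒳|c_min, for every fixed Q : 𝒳×𝒜 → ℝ and μ ∈ Δ(𝒳), the map μ' ↦ μ'P^{Q,μ,μ'} on Δ(𝒳) satisfies ‖μ'₁P^{Q,μ,μ'₁} − μ'₂P^{Q,μ,μ'₂}‖₁ ≤ (L_p^loc + 1 − |𝒳|c_min)‖μ'₁ − μ'₂‖₁ with L_p^loc + 1 − |𝒳|c_min < 1, hence has a unique fixed point μ'*_{Q,μ} ∈ Δ(𝒳); moreover ‖μ'*_{Q,μ} − μ'*_{Q₁,μ}‖₁ ≤ (φ|𝒜|/(|𝒳|c_min − L_p^loc))·‖Q − Q₁‖∞ for all Q, Q₁. -/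

import Mathlib

/-!
The soft-min transition matrix `P = P^{Q,μ,μ'}` is row-stochastic with entries at least `c_min`,
so by Dobrushin's argument it shrinks the ℓ¹ norm of every zero-mass vector by the factor
`1 - |𝒳| c_min`; replacing `μ'₁` by `μ'₂` moves each row of `P` by at most
`L_p^loc ‖μ'₁ - μ'₂‖₁`. Splitting `μ'₁ P₁ - μ'₂ P₂ = (μ'₁ - μ'₂) P₁ + μ'₂ (P₁ - P₂)` gives the
contraction, hence uniqueness of the fixed point. Soft-min is coordinatewise `φ`-Lipschitz for the
sup norm (along a segment its derivative is `φ s_a (1 - s_a)` times at most `2δ`), so changing `Q`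
moves each row of `P` by at most `φ |𝒜| ‖Q - Q₁‖∞`; the same splitting applied to the two fixed
points then bounds their distance `d` by `(1 - |𝒳| c_min + L_p^loc) d + φ |𝒜| ‖Q - Q₁‖∞`.
-/

open Finset Filter
open scoped Classical

noncomputable section

variable {X A : Type*}

/-- A probability vector on a finite set. -/
def IsProb [Fintype X] (μ : X → ℝ) : Prop := (∀ x, 0 ≤ μ x) ∧ ∑ x, μ x = 1

/-- ℓ¹ norm of a signed measure / vector on a finite set. -/
def l1 [Fintype X] (μ : X → ℝ) : ℝ := ∑ x, |μ x|

/-- Sup norm of a Q-table. -/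
def supQ [Fintype X] [Fintype A] [Nonempty X] [Nonempty A] (Q : X → A → ℝ) : ℝ :=
  Finset.univ.sup' Finset.univ_nonempty (fun xa : X × A => |Q xa.1 xa.2|)

/-- Minimum of a row of a Q-table (minimum over actions). -/
def minRow [Fintype A] [Nonempty A] (q : A → ℝ) : ℝ :=
  Finset.univ.inf' Finset.univ_nonempty q

/-- The soft-min distribution over actions with parameter φ. -/
def softmin [Fintype A] (φ : ℝ) (z : A → ℝ) (a : A) : ℝ :=
  Real.exp (-φ * z a) / ∑ a', Real.exp (-φ * z a')

/-- The argmin_e policy: uniform over the minimizers, zero elsewhere. -/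
def argminE [Fintype A] [Nonempty A] (q : A → ℝ) (a : A) : ℝ :=
  if q a = minRow q then (1 : ℝ) / (Finset.univ.filter fun a' => q a' = minRow q).card else 0

/-- (P^{π,μ,μ'} ν)(x) = ∑_{x₁} ν(x₁) ∑_a π(a|x₁) p(x|x₁,a,μ,μ') for a kernel with a
global distribution μ and a local distribution μ'. -/
def Ppush3 [Fintype X] [Fintype A] (p : X → A → (X → ℝ) → (X → ℝ) → X → ℝ)
    (π : X → A → ℝ) (μ μ' ν : X → ℝ) (x : X) : ℝ :=
  ∑ x1, ν x1 * ∑ a, π x1 a * p x1 a μ μ' x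

/-- The Bellman operator (B_{μ,μ'} Q)(x,a) = f(x,a,μ,μ') + γ ∑_{x'} p(x'|x,a,μ,μ') min_{a'} Q(x',a'). -/
def bell3 [Fintype X] [Fintype A] [Nonempty A]
    (f : X → A → (X → ℝ) → (X → ℝ) → ℝ) (p : X → A → (X → ℝ) → (X → ℝ) → X → ℝ)
    (γ : ℝ) (μ μ' : X → ℝ) (Q : X → A → ℝ) (x : X) (a : A) : ℝ :=
  f x a μ μ' + γ * ∑ x', p x a μ μ' x' * minRow (Q x')


section Softmin

variable [Fintype A]

lemma softmin_pos [Nonempty A] (φ : ℝ) (z : A → ℝ) (a : A) : 0 < softmin φ z a :=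
  div_pos (Real.exp_pos _) (sum_pos (fun _ _ => Real.exp_pos _) univ_nonempty)

lemma isProb_softmin [Nonempty A] (φ : ℝ) (z : A → ℝ) : IsProb (softmin φ z) := by
  refine ⟨fun a => (softmin_pos φ z a).le, ?_⟩
  simp only [softmin]
  rw [← sum_div, div_self (sum_pos (fun _ _ => Real.exp_pos _) univ_nonempty).ne']

lemma hasDerivAt_softmin_add_smul [Nonempty A] (φ : ℝ) (z Δ : A → ℝ) (a : A) (t : ℝ) :
    HasDerivAt (fun t : ℝ => softmin φ (z + t • Δ) a)
      (-φ * softmin φ (z + t • Δ) a * ∑ b, softmin φ (z + t • Δ) b * (Δ a - Δ b)) t := by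
  have hE : ∀ b, HasDerivAt (fun t : ℝ => Real.exp (-φ * (z + t • Δ) b))
      (Real.exp (-φ * (z + t • Δ) b) * (-φ * Δ b)) t := fun b => by
    simpa using (((hasDerivAt_id t).mul_const (Δ b)).const_add (z b)).const_mul (-φ) |>.exp
  have hS : 0 < ∑ b, Real.exp (-φ * (z + t • Δ) b) :=
    sum_pos (fun _ _ => Real.exp_pos _) univ_nonempty
  refine ((hE a).fun_div (HasDerivAt.fun_sum fun b _ => hE b) hS.ne').congr_deriv ?_
  set E := fun b => Real.exp (-φ * (z + t • Δ) b)
  set S := ∑ b, E b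
  change (E a * (-φ * Δ a) * S - E a * ∑ b, E b * (-φ * Δ b)) / S ^ 2
    = -φ * (E a / S) * ∑ b, E b / S * (Δ a - Δ b)
  simp only [div_mul_eq_mul_div, ← sum_div, mul_sub, sum_sub_distrib, ← sum_mul]
  field_simp
  simp only [← mul_sum, sum_neg_distrib, mul_assoc]
  ring

lemma abs_sum_mul_sub_le {s Δ : A → ℝ} (hs : IsProb s) {δ : ℝ} (hΔ : ∀ b, |Δ b| ≤ δ) (a : A) :
    |∑ b, s b * (Δ a - Δ b)| ≤ 2 * δ * (1 - s a) := by
  have hdiff : ∀ b, |Δ a - Δ b| ≤ 2 * δ := fun b =>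
    (abs_sub _ _).trans (by linarith [hΔ a, hΔ b])
  calc |∑ b, s b * (Δ a - Δ b)| = |∑ b ∈ univ.erase a, s b * (Δ a - Δ b)| := by
        rw [← add_sum_erase _ _ (mem_univ a), sub_self, mul_zero, zero_add]
    _ ≤ ∑ b ∈ univ.erase a, s b * (2 * δ) := by
        refine (abs_sum_le_sum_abs _ _).trans (sum_le_sum fun b _ => ?_)
        rw [abs_mul, abs_of_nonneg (hs.1 b)]
        exact mul_le_mul_of_nonneg_left (hdiff b) (hs.1 b)
    _ = 2 * δ * (1 - s a) := by
        rw [← sum_mul, sum_erase_eq_sub (mem_univ a), hs.2]; ring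

lemma abs_softmin_sub_softmin_le [Nonempty A] {φ : ℝ} (hφ : 0 ≤ φ) {z z' : A → ℝ} {δ : ℝ}
    (hδ : ∀ a, |z a - z' a| ≤ δ) (a : A) :
    |softmin φ z a - softmin φ z' a| ≤ φ * δ := by
  have hδ0 : 0 ≤ δ := (abs_nonneg _).trans (hδ a)
  have hbound : ∀ t : ℝ, ‖-φ * softmin φ (z' + t • (z - z')) a *
      ∑ b, softmin φ (z' + t • (z - z')) b * ((z - z') a - (z - z') b)‖ ≤ φ * δ := fun t => by
    have hs := isProb_softmin φ (z' + t • (z - z'))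
    have hsum := abs_sum_mul_sub_le hs (Δ := z - z') hδ a
    set s := softmin φ (z' + t • (z - z'))
    rw [Real.norm_eq_abs, abs_mul, abs_mul, abs_neg, abs_of_nonneg hφ, abs_of_nonneg (hs.1 a)]
    calc φ * s a * |∑ b, s b * ((z - z') a - (z - z') b)| ≤ φ * s a * (2 * δ * (1 - s a)) :=
          mul_le_mul_of_nonneg_left hsum (mul_nonneg hφ (hs.1 a))
      _ ≤ φ * δ := by nlinarith [mul_nonneg (mul_nonneg hφ hδ0) (sq_nonneg (2 * s a - 1))]
  have := norm_image_sub_le_of_norm_deriv_le_segment_01'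
    (fun t _ => (hasDerivAt_softmin_add_smul φ z' (z - z') a t).hasDerivWithinAt)
    (fun t _ => hbound t)
  simpa [Real.norm_eq_abs] using this

end Softmin

open Matrix

section L1

variable [Fintype X]

lemma l1_nonneg (f : X → ℝ) : 0 ≤ l1 f :=
  sum_nonneg fun _ _ => abs_nonneg _

lemma l1_add_le (f g : X → ℝ) : l1 (f + g) ≤ l1 f + l1 g := by
  simp only [l1, Pi.add_apply]
  rw [← sum_add_distrib]
  exact sum_le_sum fun x _ => abs_add_le _ _

lemma l1_of_isProb {ν : X → ℝ} (hν : IsProb ν) : l1 ν = 1 :=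
  (sum_congr rfl fun x _ => abs_of_nonneg (hν.1 x)).trans hν.2

lemma eq_of_l1_sub_le_mul {f g : X → ℝ} {k : ℝ} (hk : k < 1)
    (h : l1 (f - g) ≤ k * l1 (f - g)) : f = g := by
  have hzero : l1 (f - g) = 0 := by nlinarith [l1_nonneg (f - g)]
  funext x
  have hx := (sum_eq_zero_iff_of_nonneg fun y _ => abs_nonneg ((f - g) y)).1 hzero x (mem_univ x)
  simpa [sub_eq_zero] using hx

variable {I : Type*} [Fintype I]

lemma l1_vecMul_le (c : I → ℝ) (K : Matrix I X ℝ) : l1 (c ᵥ* K) ≤ ∑ i, |c i| * l1 (K i) := by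
  calc l1 (c ᵥ* K) ≤ ∑ x, ∑ i, |c i * K i x| :=
        sum_le_sum fun x _ => abs_sum_le_sum_abs _ _
    _ = ∑ i, |c i| * l1 (K i) := by
        rw [sum_comm]
        simp only [abs_mul, l1, mul_sum]

lemma l1_vecMul_le_of_isProb {ν : I → ℝ} (hν : IsProb ν) {K : Matrix I X ℝ} {C : ℝ}
    (hK : ∀ i, l1 (K i) ≤ C) : l1 (ν ᵥ* K) ≤ C :=
  calc l1 (ν ᵥ* K) ≤ ∑ i, ν i * C := by
        refine (l1_vecMul_le ν K).trans (sum_le_sum fun i _ => ?_)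
        rw [abs_of_nonneg (hν.1 i)]
        exact mul_le_mul_of_nonneg_left (hK i) (hν.1 i)
    _ = C := by rw [← sum_mul, hν.2, one_mul]

lemma l1_vecMul_le_l1 (d : I → ℝ) {K : Matrix I X ℝ} (hK : ∀ i, l1 (K i) ≤ 1) :
    l1 (d ᵥ* K) ≤ l1 d :=
  (l1_vecMul_le d K).trans <| sum_le_sum fun i _ =>
    mul_le_of_le_one_right (abs_nonneg _) (hK i)

end L1

section Dobrushin

variable [Fintype X] {K K₁ K₂ : Matrix X X ℝ} {c : ℝ}

/-- Dobrushin's contraction: subtracting the floor `c` from every entry does not change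
`d ᵥ* K` for `d` of total mass zero, and leaves rows of mass `1 - |X| c`. -/
lemma l1_vecMul_le_of_sum_eq_zero (hrow : ∀ x, ∑ x', K x x' = 1) (hc : ∀ x x', c ≤ K x x')
    {d : X → ℝ} (hd : ∑ x, d x = 0) :
    l1 (d ᵥ* K) ≤ (1 - Fintype.card X * c) * l1 d := by
  set K' : Matrix X X ℝ := fun x x' => K x x' - c
  have hshift : d ᵥ* K = d ᵥ* K' := by
    funext x'
    simp [K', vecMul, dotProduct, mul_sub, sum_sub_distrib, ← sum_mul, hd]
  have hrow' : ∀ x, l1 (K' x) = 1 - Fintype.card X * c := fun x => by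
    simp only [l1, K']
    rw [sum_congr rfl fun x' _ => abs_of_nonneg (sub_nonneg.2 (hc x x')), sum_sub_distrib,
      hrow x, sum_const, card_univ, nsmul_eq_mul]
  rw [hshift]
  refine (l1_vecMul_le d K').trans_eq ?_
  rw [sum_congr rfl fun i _ => by rw [hrow' i], ← sum_mul, mul_comm, l1]

lemma l1_vecMul_sub_vecMul_le (hrow : ∀ x, ∑ x', K₁ x x' = 1) (hc : ∀ x x', c ≤ K₁ x x')
    {ε : ℝ} (hK : ∀ x, l1 (K₁ x - K₂ x) ≤ ε) {ν₁ ν₂ : X → ℝ} (hν₁ : ∑ x, ν₁ x = 1)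
    (hν₂ : IsProb ν₂) :
    l1 (ν₁ ᵥ* K₁ - ν₂ ᵥ* K₂) ≤ (1 - Fintype.card X * c) * l1 (ν₁ - ν₂) + ε := by
  have hsplit : ν₁ ᵥ* K₁ - ν₂ ᵥ* K₂ = (ν₁ - ν₂) ᵥ* K₁ + ν₂ ᵥ* (K₁ - K₂) := by
    rw [sub_vecMul, vecMul_sub]; abel
  have hmass : ∑ x, (ν₁ - ν₂) x = 0 := by simp [sum_sub_distrib, hν₁, hν₂.2]
  rw [hsplit]
  exact (l1_add_le _ _).trans (add_le_add (l1_vecMul_le_of_sum_eq_zero hrow hc hmass)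
    (l1_vecMul_le_of_isProb hν₂ hK))

lemma l1_sub_le_of_vecMul_eq_self (hrow : ∀ x, ∑ x', K₁ x x' = 1) (hc : ∀ x x', c ≤ K₁ x x')
    {L η : ℝ} (hL : L < Fintype.card X * c) {ν₁ ν₂ : X → ℝ}
    (hK : ∀ x, l1 (K₁ x - K₂ x) ≤ L * l1 (ν₁ - ν₂) + η) (hν₁ : IsProb ν₁) (hν₂ : IsProb ν₂)
    (h₁ : ν₁ ᵥ* K₁ = ν₁) (h₂ : ν₂ ᵥ* K₂ = ν₂) :
    l1 (ν₁ - ν₂) ≤ η / (Fintype.card X * c - L) := by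
  have h := l1_vecMul_sub_vecMul_le hrow hc hK hν₁.2 hν₂
  rw [h₁, h₂] at h
  rw [le_div_iff₀ (sub_pos.2 hL)]
  linarith

end Dobrushin

lemma abs_le_supQ [Fintype X] [Fintype A] [Nonempty X] [Nonempty A] (Q : X → A → ℝ) (x : X)
    (a : A) : |Q x a| ≤ supQ Q :=
  le_sup' (fun xa : X × A => |Q xa.1 xa.2|) (mem_univ (x, a))

section SoftminMatrix

variable [Fintype X] [Fintype A] [Nonempty A] {φ : ℝ}
  {p : X → A → (X → ℝ) → (X → ℝ) → X → ℝ} {Q Q₁ : X → A → ℝ} {μ μ' μ'₁ μ'₂ : X → ℝ}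

variable (φ p Q μ μ') in
/-- The matrix `P^{Q,μ,μ'}`. -/
def softminMatrix : Matrix X X ℝ :=
  fun x => softmin φ (Q x) ᵥ* of fun a => p x a μ μ'

omit [Nonempty A] in
lemma Ppush3_softmin_eq_vecMul (ν : X → ℝ) :
    Ppush3 p (fun x => softmin φ (Q x)) μ μ' ν = ν ᵥ* softminMatrix φ p Q μ μ' :=
  rfl

lemma softminMatrix_row_sum (hp1 : ∀ x a, ∑ x', p x a μ μ' x' = 1) (x : X) :
    ∑ x', softminMatrix φ p Q μ μ' x x' = 1 := by
  simp only [softminMatrix, vecMul, dotProduct, of_apply]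
  rw [sum_comm]
  simp only [← mul_sum, hp1, mul_one, (isProb_softmin φ (Q x)).2]

omit [Fintype X] in
lemma le_softminMatrix {c : ℝ} (hc : ∀ x a x', c ≤ p x a μ μ' x') (x x' : X) :
    c ≤ softminMatrix φ p Q μ μ' x x' := by
  have hs := isProb_softmin φ (Q x)
  calc c = ∑ a, softmin φ (Q x) a * c := by rw [← sum_mul, hs.2, one_mul]
    _ ≤ softminMatrix φ p Q μ μ' x x' :=
        sum_le_sum fun a _ => mul_le_mul_of_nonneg_left (hc x a x') (hs.1 a)

lemma l1_softminMatrix_sub_le_of_local {x : X} {ε : ℝ}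
    (hp : ∀ a, l1 (fun x' => p x a μ μ'₁ x' - p x a μ μ'₂ x') ≤ ε) :
    l1 (softminMatrix φ p Q μ μ'₁ x - softminMatrix φ p Q μ μ'₂ x) ≤ ε := by
  rw [softminMatrix, softminMatrix, ← vecMul_sub]
  exact l1_vecMul_le_of_isProb (isProb_softmin φ (Q x)) hp

lemma l1_softminMatrix_sub_le_of_policy (hφ : 0 ≤ φ) {x : X} (hp : ∀ a, IsProb (p x a μ μ'))
    {δ : ℝ} (hδ : ∀ a, |Q x a - Q₁ x a| ≤ δ) :
    l1 (softminMatrix φ p Q μ μ' x - softminMatrix φ p Q₁ μ μ' x) ≤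
      φ * Fintype.card A * δ := by
  rw [softminMatrix, softminMatrix, ← sub_vecMul]
  refine (l1_vecMul_le_l1 _ fun a => (l1_of_isProb (hp a)).le).trans ?_
  calc l1 (softmin φ (Q x) - softmin φ (Q₁ x)) ≤ ∑ _a : A, φ * δ :=
        sum_le_sum fun a _ => abs_softmin_sub_softmin_le hφ hδ a
    _ = φ * Fintype.card A * δ := by rw [sum_const, card_univ, nsmul_eq_mul]; ring

lemma l1_vecMul_softminMatrix_sub_le {c L : ℝ} (hp1 : ∀ x a, ∑ x', p x a μ μ'₁ x' = 1)
    (hc : ∀ x a x', c ≤ p x a μ μ'₁ x')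
    (hloc : ∀ x a, l1 (fun x' => p x a μ μ'₁ x' - p x a μ μ'₂ x') ≤ L * l1 (μ'₁ - μ'₂))
    (h₁ : IsProb μ'₁) (h₂ : IsProb μ'₂) :
    l1 (μ'₁ ᵥ* softminMatrix φ p Q μ μ'₁ - μ'₂ ᵥ* softminMatrix φ p Q μ μ'₂) ≤
      (L + 1 - Fintype.card X * c) * l1 (μ'₁ - μ'₂) := by
  have := l1_vecMul_sub_vecMul_le (softminMatrix_row_sum hp1) (le_softminMatrix hc)
    (K₂ := softminMatrix φ p Q μ μ'₂) (fun x => l1_softminMatrix_sub_le_of_local (hloc x)) h₁.2 h₂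
  linarith

lemma l1_sub_le_of_vecMul_softminMatrix_eq_self (hφ : 0 ≤ φ) {c L δ : ℝ}
    (hL : L < Fintype.card X * c) {ν ν₁ : X → ℝ} (hν : IsProb ν) (hν₁ : IsProb ν₁)
    (hp1 : ∀ x a, ∑ x', p x a μ ν x' = 1) (hc : ∀ x a x', c ≤ p x a μ ν x')
    (hp : ∀ x a, IsProb (p x a μ ν₁))
    (hloc : ∀ x a, l1 (fun x' => p x a μ ν x' - p x a μ ν₁ x') ≤ L * l1 (ν - ν₁))
    (hδ : ∀ x a, |Q x a - Q₁ x a| ≤ δ)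
    (hfix : ν ᵥ* softminMatrix φ p Q μ ν = ν) (hfix₁ : ν₁ ᵥ* softminMatrix φ p Q₁ μ ν₁ = ν₁) :
    l1 (ν - ν₁) ≤ φ * Fintype.card A * δ / (Fintype.card X * c - L) := by
  refine l1_sub_le_of_vecMul_eq_self (softminMatrix_row_sum hp1) (le_softminMatrix hc) hL
    (fun x => ?_) hν hν₁ hfix hfix₁
  rw [← sub_add_sub_cancel _ (softminMatrix φ p Q μ ν₁ x)]
  exact (l1_add_le _ _).trans (add_le_add (l1_softminMatrix_sub_le_of_local (hloc x))
    (l1_softminMatrix_sub_le_of_policy hφ (hp x) (hδ x)))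

end SoftminMatrix

theorem mfcg_local_fixed_point_general [Fintype X] [Fintype A] [Nonempty X] [Nonempty A]
    (φ : ℝ) (hφ0 : 0 < φ)
    (p : X → A → (X → ℝ) → (X → ℝ) → X → ℝ)
    (hp0 : ∀ x a μ μ' x', IsProb μ → IsProb μ' → 0 ≤ p x a μ μ' x')
    (hp1 : ∀ x a μ μ', IsProb μ → IsProb μ' → ∑ x', p x a μ μ' x' = 1)
    (cmin : ℝ)
    (hcmin : ∀ x a μ μ' x', IsProb μ → IsProb μ' → cmin ≤ p x a μ μ' x')
    (Lpglob Lploc : ℝ) (hLpglob0 : 0 ≤ Lpglob)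
    (hLploc : ∀ x a μ μ' μ'₁, IsProb μ → IsProb μ' → IsProb μ'₁ →
      ∑ x', |p x a μ μ' x' - p x a μ μ'₁ x'| ≤ Lploc * l1 (fun y => μ' y - μ'₁ y))
    (hLpc : Lpglob + Lploc < (Fintype.card X : ℝ) * cmin)
    -- μ'*_{Q,μ} : the fixed point of μ' ↦ μ'P^{Q,μ,μ'}
    (mups : (X → A → ℝ) → (X → ℝ) → X → ℝ)
    (hmups : ∀ (Q : X → A → ℝ) (μ : X → ℝ), IsProb μ →
      IsProb (mups Q μ) ∧
        Ppush3 p (fun x1 => softmin φ (Q x1)) μ (mups Q μ) (mups Q μ) = mups Q μ) :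
    (∀ (Q : X → A → ℝ) (μ μ'₁ μ'₂ : X → ℝ), IsProb μ → IsProb μ'₁ → IsProb μ'₂ →
        l1 (fun x => Ppush3 p (fun x1 => softmin φ (Q x1)) μ μ'₁ μ'₁ x
              - Ppush3 p (fun x1 => softmin φ (Q x1)) μ μ'₂ μ'₂ x)
          ≤ (Lploc + 1 - (Fintype.card X : ℝ) * cmin) * l1 (fun x => μ'₁ x - μ'₂ x))
    ∧ (Lploc + 1 - (Fintype.card X : ℝ) * cmin < 1)
    ∧ (∀ (Q : X → A → ℝ) (μ : X → ℝ), IsProb μ →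
        ∃! μ' : X → ℝ, IsProb μ' ∧ Ppush3 p (fun x1 => softmin φ (Q x1)) μ μ' μ' = μ')
    ∧ (∀ (Q Q₁ : X → A → ℝ) (μ : X → ℝ), IsProb μ →
        l1 (fun x => mups Q μ x - mups Q₁ μ x)
          ≤ φ * (Fintype.card A : ℝ) / ((Fintype.card X : ℝ) * cmin - Lploc)
              * supQ (fun x a => Q x a - Q₁ x a)) := by
  have hLploc_lt : Lploc < Fintype.card X * cmin := by linarith
  have hcontraction Q μ μ'₁ μ'₂ (hμ : IsProb μ) (h₁ : IsProb μ'₁) (h₂ : IsProb μ'₂) :=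
    l1_vecMul_softminMatrix_sub_le (φ := φ) (Q := Q) (fun x a => hp1 x a μ μ'₁ hμ h₁)
      (fun x a x' => hcmin x a μ μ'₁ x' hμ h₁) (fun x a => hLploc x a μ μ'₁ μ'₂ hμ h₁ h₂) h₁ h₂
  refine ⟨hcontraction, by linarith,
    fun Q μ hμ => ⟨mups Q μ, hmups Q μ hμ, fun ν ⟨hν, hfix⟩ => ?_⟩, fun Q Q₁ μ hμ => ?_⟩
  · obtain ⟨hν', hfix'⟩ := hmups Q μ hμ
    have := hcontraction Q μ ν (mups Q μ) hμ hν hν'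
    rw [← Ppush3_softmin_eq_vecMul, ← Ppush3_softmin_eq_vecMul, hfix, hfix'] at this
    exact eq_of_l1_sub_le_mul (by linarith) this
  · obtain ⟨hν, hfix⟩ := hmups Q μ hμ
    obtain ⟨hν₁, hfix₁⟩ := hmups Q₁ μ hμ
    refine (l1_sub_le_of_vecMul_softminMatrix_eq_self hφ0.le hLploc_lt hν hν₁
      (fun x a => hp1 x a μ _ hμ hν) (fun x a x' => hcmin x a μ _ x' hμ hν)
      (fun x a => ⟨fun x' => hp0 x a μ _ x' hμ hν₁, hp1 x a μ _ hμ hν₁⟩)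
      (fun x a => hLploc x a μ _ _ hμ hν hν₁) (abs_le_supQ (Q - Q₁)) hfix hfix₁).trans_eq ?_
    rw [div_mul_eq_mul_div]
    rfl

/-- local-distribution fixed point for MFCG: for fixed Q and global μ,
the map μ' ↦ μ'P^{Q,μ,μ'} is a strict contraction with constant L_p^loc + 1 − |𝒳|c_min < 1,
hence has a unique fixed point μ'*_{Q,μ}; moreover Q ↦ μ'*_{Q,μ} is
(φ|𝒜|/(|𝒳|c_min − L_p^loc))-Lipschitz. -/
theorem mfcg_local_fixed_point [Fintype X] [Fintype A] [Nonempty X] [Nonempty A]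
    (φ : ℝ) (hφ0 : 0 < φ)
    (p : X → A → (X → ℝ) → (X → ℝ) → X → ℝ)
    (hp0 : ∀ x a μ μ' x', IsProb μ → IsProb μ' → 0 ≤ p x a μ μ' x')
    (hp1 : ∀ x a μ μ', IsProb μ → IsProb μ' → ∑ x', p x a μ μ' x' = 1)
    (cmin : ℝ) (hcmin0 : 0 ≤ cmin)
    (hcmin : ∀ x a μ μ' x', IsProb μ → IsProb μ' → cmin ≤ p x a μ μ' x')
    (Lpglob Lploc : ℝ) (hLpglob0 : 0 ≤ Lpglob) (hLploc0 : 0 ≤ Lploc)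
    (hLpglob : ∀ x a μ μ₁ μ', IsProb μ → IsProb μ₁ → IsProb μ' →
      ∑ x', |p x a μ μ' x' - p x a μ₁ μ' x'| ≤ Lpglob * l1 (fun y => μ y - μ₁ y))
    (hLploc : ∀ x a μ μ' μ'₁, IsProb μ → IsProb μ' → IsProb μ'₁ →
      ∑ x', |p x a μ μ' x' - p x a μ μ'₁ x'| ≤ Lploc * l1 (fun y => μ' y - μ'₁ y))
    (hLpc : Lpglob + Lploc < (Fintype.card X : ℝ) * cmin)
    -- μ'*_{Q,μ} : the fixed point of μ' ↦ μ'P^{Q,μ,μ'}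
    (mups : (X → A → ℝ) → (X → ℝ) → X → ℝ)
    (hmups : ∀ (Q : X → A → ℝ) (μ : X → ℝ), IsProb μ →
      IsProb (mups Q μ) ∧
        Ppush3 p (fun x1 => softmin φ (Q x1)) μ (mups Q μ) (mups Q μ) = mups Q μ) :
    (∀ (Q : X → A → ℝ) (μ μ'₁ μ'₂ : X → ℝ), IsProb μ → IsProb μ'₁ → IsProb μ'₂ →
        l1 (fun x => Ppush3 p (fun x1 => softmin φ (Q x1)) μ μ'₁ μ'₁ x
              - Ppush3 p (fun x1 => softmin φ (Q x1)) μ μ'₂ μ'₂ x)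
          ≤ (Lploc + 1 - (Fintype.card X : ℝ) * cmin) * l1 (fun x => μ'₁ x - μ'₂ x))
    ∧ (Lploc + 1 - (Fintype.card X : ℝ) * cmin < 1)
    ∧ (∀ (Q : X → A → ℝ) (μ : X → ℝ), IsProb μ →
        ∃! μ' : X → ℝ, IsProb μ' ∧ Ppush3 p (fun x1 => softmin φ (Q x1)) μ μ' μ' = μ')
    ∧ (∀ (Q Q₁ : X → A → ℝ) (μ : X → ℝ), IsProb μ →
        l1 (fun x => mups Q μ x - mups Q₁ μ x)
          ≤ φ * (Fintype.card A : ℝ) / ((Fintype.card X : ℝ) * cmin - Lploc)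
              * supQ (fun x a => Q x a - Q₁ x a)) :=
  mfcg_local_fixed_point_general φ hφ0 p hp0 hp1 cmin hcmin Lpglob Lploc hLpglob0 hLploc hLpc mups
    hmups
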